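/- Let F be a spreading linear triple system on a finite set V with |V| = n > 5, and let T ∈ F. Then the number of triples T' ∈ F that are adjacent to T is at least Val(T)·(Val(T) − 3)/6. -/

import Mathlib

open Finset

variable {α : Type*}

/-- A pair of (distinct) vertices is covered if it lies in some triple of `F`. -/
def Covered [DecidableEq α] (F : Finset (Finset α)) (x y : α) : Prop :=
  ∃ T ∈ F, x ∈ T ∧ y ∈ T

instance [DecidableEq α] (F : Finset (Finset α)) (x y : α) : Decidable (Covered F x y) :=
  inferInstanceAs (Decidable (∃ T ∈ F, x ∈ T ∧ y ∈ T))

/-- Linear triple system on `V`. -/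
def IsLinearTS [DecidableEq α] (V : Finset α) (F : Finset (Finset α)) : Prop :=
  (∀ T ∈ F, T ⊆ V ∧ T.card = 3) ∧
    ∀ x ∈ V, ∀ y ∈ V, x ≠ y → (F.filter fun T => x ∈ T ∧ y ∈ T).card ≤ 1

/-- Steiner triple system on `V`. -/
def IsSTS [DecidableEq α] (V : Finset α) (F : Finset (Finset α)) : Prop :=
  (∀ T ∈ F, T ⊆ V ∧ T.card = 3) ∧
    ∀ x ∈ V, ∀ y ∈ V, x ≠ y → (F.filter fun T => x ∈ T ∧ y ∈ T).card = 1

/-- Neighbourhood of `V'` with respect to the triple system `F` on `V`. -/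
def nbhd [DecidableEq α] (V : Finset α) (F : Finset (Finset α)) (V' : Finset α) : Finset α :=
  (V \ V').filter fun z => ∃ x ∈ V', ∃ y ∈ V', x ≠ y ∧ ({x, y, z} : Finset α) ∈ F

/-- `F` is spreading: the closure of every nontrivial subset is `V`. -/
def IsSpreading [DecidableEq α] (V : Finset α) (F : Finset (Finset α)) : Prop :=
  ∀ V' ⊆ V, 3 ≤ V'.card → V' ∉ F →
    ∀ W, V' ⊆ W → W ⊆ V → nbhd V F W = ∅ → W = V

/-- `F` is weakly spreading. -/
def IsWeaklySpreading [DecidableEq α] (V : Finset α) (F : Finset (Finset α)) : Prop :=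
  ∀ F' ⊆ F, 2 ≤ F'.card →
    ∀ W, F'.biUnion id ⊆ W → W ⊆ V → nbhd V F W = ∅ → W = V

/-- `Val(T)`: number of private neighbours of the triple `T`. -/
def valT [DecidableEq α] (V : Finset α) (F : Finset (Finset α)) (T : Finset α) : ℕ :=
  ((V \ T).filter fun v => (T.filter fun t => Covered F v t).card = 1).card

/-- Two triples are adjacent if pairs of each span a `C₄` in the complement of the skeleton. -/
def AdjT [DecidableEq α] (F : Finset (Finset α)) (T T' : Finset α) : Prop :=
  ∃ v₁ ∈ T, ∃ v₂ ∈ T, ∃ u₁ ∈ T', ∃ u₂ ∈ T',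
    v₁ ≠ v₂ ∧ u₁ ≠ u₂ ∧ v₁ ≠ u₁ ∧ v₁ ≠ u₂ ∧ v₂ ≠ u₁ ∧ v₂ ≠ u₂ ∧
    ¬Covered F v₁ u₁ ∧ ¬Covered F u₁ v₂ ∧ ¬Covered F v₂ u₂ ∧ ¬Covered F u₂ v₁

instance [DecidableEq α] (F : Finset (Finset α)) (T T' : Finset α) : Decidable (AdjT F T T') :=
  inferInstanceAs (Decidable (∃ v₁ ∈ T, ∃ v₂ ∈ T, ∃ u₁ ∈ T', ∃ u₂ ∈ T',
    v₁ ≠ v₂ ∧ u₁ ≠ u₂ ∧ v₁ ≠ u₁ ∧ v₁ ≠ u₂ ∧ v₂ ≠ u₁ ∧ v₂ ≠ u₂ ∧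
    ¬Covered F v₁ u₁ ∧ ¬Covered F u₁ v₂ ∧ ¬Covered F v₂ u₂ ∧ ¬Covered F u₂ v₁))


/-!
Split the private neighbours of `T` into classes `S_t`, `t ∈ T`, according to the unique vertex
of `T` they are covered with. Two vertices `u ≠ v` of `S_t` must be covered: otherwise, with a
vertex `t₁ ≠ t` of `T`, they would be three pairwise uncovered vertices, a closed set. The triple
through `u, v` is adjacent to `T`, via the uncovered 4-cycle `t₁ u t₂ v` on the other two vertices
of `T`. No triple lies inside one class, since together with `t₁` it would span a closed set of
four vertices. Two distinct such pairs in one triple would share a vertex, hence a class, and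
fill the triple; so distinct pairs lie in distinct triples. Hence `T` has at least
`∑ₜ C(|S_t|, 2)` adjacent triples, and by Cauchy–Schwarz this is at least `s(s - 3)/6` where
`s = ∑ₜ |S_t| = Val(T)`.
-/

theorem Covered.symm [DecidableEq α] {F : Finset (Finset α)} {x y : α} (h : Covered F x y) :
    Covered F y x :=
  let ⟨T, hT, hx, hy⟩ := h
  ⟨T, hT, hy, hx⟩

theorem exists_two_ne_of_two_lt_card {T : Finset α} [DecidableEq α] (hT : 2 < T.card) {t : α}
    (ht : t ∈ T) : ∃ t₁ ∈ T, ∃ t₂ ∈ T, t₁ ≠ t₂ ∧ t₁ ≠ t ∧ t₂ ≠ t := by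
  obtain ⟨a, ha, b, hb, hab⟩ := one_lt_card.mp (by rw [card_erase_of_mem ht]; omega :
    1 < (T.erase t).card)
  exact ⟨a, mem_of_mem_erase ha, b, mem_of_mem_erase hb, hab, ne_of_mem_erase ha,
    ne_of_mem_erase hb⟩

theorem union_eq_and_inter_nonempty_of_card_two_subset [DecidableEq α] {e e' C : Finset α}
    (he : e.card = 2) (he' : e'.card = 2) (hC : C.card = 3) (heC : e ⊆ C) (he'C : e' ⊆ C)
    (hne : e ≠ e') : e ∪ e' = C ∧ (e ∩ e').Nonempty := by
  have hunion : e ∪ e' ⊆ C := union_subset heC he'C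
  have hlt : e.card < (e ∪ e').card :=
    card_lt_card (ssubset_of_subset_of_ne subset_union_left fun h =>
      hne (eq_of_subset_of_card_le (h ▸ subset_union_right) (by omega)).symm)
  have hsum := card_union_add_card_inter e e'
  have := card_le_card hunion
  exact ⟨eq_of_subset_of_card_le hunion (by omega), card_pos.mp (by omega)⟩

theorem sum_mul_sub_card_div_le_sum_choose_two {ι : Type*} (s : Finset ι) (f : ι → ℕ) :
    (∑ i ∈ s, (f i : ℝ)) * (∑ i ∈ s, (f i : ℝ) - s.card) / (2 * s.card)
      ≤ ∑ i ∈ s, ((f i).choose 2 : ℝ) := by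
  rcases s.eq_empty_or_nonempty with rfl | hs
  · simp
  have hk : (0 : ℝ) < s.card := by exact_mod_cast hs.card_pos
  have hchoose : ∑ i ∈ s, ((f i).choose 2 : ℝ)
      = (∑ i ∈ s, (f i : ℝ) ^ 2 - ∑ i ∈ s, (f i : ℝ)) / 2 := by
    simp only [Nat.cast_choose_two, ← sum_div, ← sum_sub_distrib, sq, mul_sub, mul_one]
  rw [hchoose, div_le_div_iff₀ (by positivity) (by positivity)]
  nlinarith [sq_sum_le_card_mul_sum_sq (s := s) (f := fun i => (f i : ℝ))]

section Spreading

variable [DecidableEq α] {V : Finset α} {F : Finset (Finset α)}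

theorem IsLinearTS.eq_of_mem_of_mem (hL : IsLinearTS V F) {C D : Finset α} {x y : α}
    (hC : C ∈ F) (hD : D ∈ F) (hxC : x ∈ C) (hyC : y ∈ C) (hxD : x ∈ D) (hyD : y ∈ D)
    (hxy : x ≠ y) : C = D :=
  card_le_one.mp (hL.2 x ((hL.1 C hC).1 hxC) y ((hL.1 C hC).1 hyC) hxy) C
    (mem_filter.mpr ⟨hC, hxC, hyC⟩) D (mem_filter.mpr ⟨hD, hxD, hyD⟩)

theorem nbhd_eq_empty_of_forall {W : Finset α}
    (h : ∀ x ∈ W, ∀ y ∈ W, x ≠ y → ∀ z, ({x, y, z} : Finset α) ∈ F → z ∈ W) :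
    nbhd V F W = ∅ :=
  eq_empty_iff_forall_notMem.mpr fun z hz => by
    obtain ⟨hzW, x, hx, y, hy, hxy, hF⟩ := mem_filter.mp hz
    exact (mem_sdiff.mp hzW).2 (h x hx y hy hxy z hF)

theorem IsSpreading.covered_of_not_covered_third (hS : IsSpreading V F) (hV : 3 < V.card)
    {a b c : α} (ha : a ∈ V) (hb : b ∈ V) (hc : c ∈ V) (hab : a ≠ b) (hac : a ≠ c)
    (hbc : b ≠ c) (nac : ¬Covered F a c) (nbc : ¬Covered F b c) : Covered F a b := by
  by_contra nab
  have hW : ({a, b, c} : Finset α) ⊆ V := by simp [insert_subset_iff, ha, hb, hc]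
  have hcard : ({a, b, c} : Finset α).card = 3 := card_eq_three.mpr ⟨a, b, c, hab, hac, hbc, rfl⟩
  have hnot : ∀ x ∈ ({a, b, c} : Finset α), ∀ y ∈ ({a, b, c} : Finset α), x ≠ y →
      ¬Covered F x y := by
    simp only [mem_insert, mem_singleton]
    rintro x (rfl | rfl | rfl) y (rfl | rfl | rfl) hxy <;>
      first
      | exact absurd rfl hxy
      | assumption
      | exact fun h => nab h.symm
      | exact fun h => nac h.symm
      | exact fun h => nbc h.symm
  have hN : nbhd V F {a, b, c} = ∅ := nbhd_eq_empty_of_forall fun x hx y hy hxy z hF =>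
    absurd ⟨_, hF, by simp, by simp⟩ (hnot x hx y hy hxy)
  have hWV := hS _ hW hcard.ge (fun hF => nab ⟨_, hF, by simp, by simp⟩) _ subset_rfl hW hN
  rw [← hWV, hcard] at hV
  exact lt_irrefl _ hV

theorem IsSpreading.exists_covered_of_notMem (hL : IsLinearTS V F) (hS : IsSpreading V F)
    (hV : 4 < V.card) {C : Finset α} (hC : C ∈ F) {y : α} (hy : y ∈ V) (hyC : y ∉ C) :
    ∃ x ∈ C, Covered F x y := by
  by_contra! h
  obtain ⟨hCV, hC3⟩ := hL.1 C hC
  have hW : insert y C ⊆ V := insert_subset hy hCV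
  have hcard : (insert y C).card = 4 := by rw [card_insert_of_notMem hyC, hC3]
  have hN : nbhd V F (insert y C) = ∅ := by
    refine nbhd_eq_empty_of_forall fun x hx x' hx' hxx' z hF => ?_
    rcases mem_insert.mp hx with rfl | hxC <;> rcases mem_insert.mp hx' with rfl | hx'C
    · exact absurd rfl hxx'
    · exact absurd ⟨_, hF, by simp, by simp⟩ (h x' hx'C)
    · exact absurd ⟨_, hF, by simp, by simp⟩ (h x hxC)
    · rw [hL.eq_of_mem_of_mem hC hF hxC hx'C (by simp) (by simp) hxx']
      simp
  have hWV := hS _ hW (by omega) (fun hF => by have := (hL.1 _ hF).2; omega) _ subset_rfl hW hN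
  rw [← hWV, hcard] at hV
  exact lt_irrefl _ hV

end Spreading

section PrivateNeighbours

variable [DecidableEq α] (V : Finset α) (F : Finset (Finset α)) (T : Finset α)

def privateNbrs : Finset α :=
  (V \ T).filter fun v => (T.filter fun t => Covered F v t).card = 1

def privateClass (t : α) : Finset α :=
  (privateNbrs V F T).filter fun v => Covered F v t

variable {V F T}

theorem valT_eq_card_privateNbrs : valT V F T = (privateNbrs V F T).card := rfl

theorem mem_sdiff_of_mem_privateClass {v t : α} (hv : v ∈ privateClass V F T t) : v ∈ V \ T :=
  (mem_filter.mp (mem_filter.mp hv).1).1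

theorem not_covered_of_mem_privateClass {v t t' : α} (hv : v ∈ privateClass V F T t)
    (ht : t ∈ T) (ht' : t' ∈ T) (hne : t' ≠ t) : ¬Covered F v t' := fun hc => by
  obtain ⟨hv, hvt⟩ := mem_filter.mp hv
  exact hne (card_le_one.mp (mem_filter.mp hv).2.le t' (mem_filter.mpr ⟨ht', hc⟩) t
    (mem_filter.mpr ⟨ht, hvt⟩))

theorem eq_of_mem_privateClass {v t t' : α} (hv : v ∈ privateClass V F T t)
    (hv' : v ∈ privateClass V F T t') (ht : t ∈ T) (ht' : t' ∈ T) : t = t' := by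
  by_contra hne
  exact not_covered_of_mem_privateClass hv ht ht' (Ne.symm hne) (mem_filter.mp hv').2

theorem card_privateNbrs_eq_sum :
    (privateNbrs V F T).card = ∑ t ∈ T, (privateClass V F T t).card :=
  calc (privateNbrs V F T).card
      = ∑ v ∈ privateNbrs V F T, (T.bipartiteAbove (Covered F) v).card := by
        rw [card_eq_sum_ones]
        exact sum_congr rfl fun v hv => (mem_filter.mp hv).2.symm
    _ = _ := sum_card_bipartiteAbove_eq_sum_card_bipartiteBelow _

theorem IsSpreading.covered_of_mem_privateClass (hS : IsSpreading V F) (hV : 3 < V.card)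
    (hTV : T ⊆ V) (hT : 1 < T.card) {t u v : α} (ht : t ∈ T) (hu : u ∈ privateClass V F T t)
    (hv : v ∈ privateClass V F T t) (huv : u ≠ v) : Covered F u v := by
  obtain ⟨t₁, ht₁, ht₁t⟩ := exists_mem_ne hT t
  have huV := mem_sdiff.mp (mem_sdiff_of_mem_privateClass hu)
  have hvV := mem_sdiff.mp (mem_sdiff_of_mem_privateClass hv)
  exact hS.covered_of_not_covered_third hV huV.1 hvV.1 (hTV ht₁) huv
    (fun h => huV.2 (h ▸ ht₁)) (fun h => hvV.2 (h ▸ ht₁))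
    (not_covered_of_mem_privateClass hu ht ht₁ ht₁t)
    (not_covered_of_mem_privateClass hv ht ht₁ ht₁t)

theorem adjT_of_mem_privateClass (hT : 2 < T.card) {t u v : α} {C : Finset α} (ht : t ∈ T)
    (hu : u ∈ privateClass V F T t) (hv : v ∈ privateClass V F T t) (huv : u ≠ v)
    (huC : u ∈ C) (hvC : v ∈ C) : AdjT F T C := by
  obtain ⟨t₁, ht₁, t₂, ht₂, h12, h1t, h2t⟩ := exists_two_ne_of_two_lt_card hT ht
  have huT := (mem_sdiff.mp (mem_sdiff_of_mem_privateClass hu)).2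
  have hvT := (mem_sdiff.mp (mem_sdiff_of_mem_privateClass hv)).2
  refine ⟨t₁, ht₁, t₂, ht₂, u, huC, v, hvC, h12, huv, ?_, ?_, ?_, ?_, ?_, ?_, ?_, ?_⟩
  · exact fun h => huT (h ▸ ht₁)
  · exact fun h => hvT (h ▸ ht₁)
  · exact fun h => huT (h ▸ ht₂)
  · exact fun h => hvT (h ▸ ht₂)
  · exact fun h => not_covered_of_mem_privateClass hu ht ht₁ h1t h.symm
  · exact not_covered_of_mem_privateClass hu ht ht₂ h2t
  · exact fun h => not_covered_of_mem_privateClass hv ht ht₂ h2t h.symm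
  · exact not_covered_of_mem_privateClass hv ht ht₁ h1t

theorem IsSpreading.not_subset_privateClass (hL : IsLinearTS V F) (hS : IsSpreading V F)
    (hV : 4 < V.card) (hTV : T ⊆ V) (hT : 1 < T.card) {t : α} (ht : t ∈ T) {C : Finset α}
    (hC : C ∈ F) : ¬C ⊆ privateClass V F T t := fun hCt => by
  obtain ⟨t₁, ht₁, ht₁t⟩ := exists_mem_ne hT t
  have ht₁C : t₁ ∉ C := fun h => (mem_sdiff.mp (mem_sdiff_of_mem_privateClass (hCt h))).2 ht₁
  obtain ⟨x, hx, hxt₁⟩ := hS.exists_covered_of_notMem hL hV hC (hTV ht₁) ht₁C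
  exact not_covered_of_mem_privateClass (hCt hx) ht ht₁ ht₁t hxt₁

theorem IsSpreading.eq_of_card_two_subset_privateClass (hL : IsLinearTS V F)
    (hS : IsSpreading V F) (hV : 4 < V.card) (hTV : T ⊆ V) (hT : 1 < T.card) {C e e' : Finset α}
    (hC : C ∈ F) {t t' : α} (ht : t ∈ T) (ht' : t' ∈ T)
    (he : e ∈ (privateClass V F T t).powersetCard 2)
    (he' : e' ∈ (privateClass V F T t').powersetCard 2) (heC : e ⊆ C) (he'C : e' ⊆ C) :
    e = e' := by
  by_contra hne
  obtain ⟨heS, he2⟩ := mem_powersetCard.mp he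
  obtain ⟨he'S, he'2⟩ := mem_powersetCard.mp he'
  obtain ⟨hunion, v, hv⟩ := union_eq_and_inter_nonempty_of_card_two_subset he2 he'2
    (hL.1 C hC).2 heC he'C hne
  obtain rfl : t = t' :=
    eq_of_mem_privateClass (heS (mem_inter.mp hv).1) (he'S (mem_inter.mp hv).2) ht ht'
  exact hS.not_subset_privateClass hL hV hTV hT ht hC (hunion ▸ union_subset heS he'S)

theorem IsSpreading.sum_choose_two_card_privateClass_le (hL : IsLinearTS V F)
    (hS : IsSpreading V F) (hV : 4 < V.card) (hT : T ∈ F) :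
    ∑ t ∈ T, (privateClass V F T t).card.choose 2 ≤ (F.filter fun T' => AdjT F T T').card := by
  obtain ⟨hTV, hT3⟩ := hL.1 T hT
  have hdisj : (T : Set α).PairwiseDisjoint fun t => (privateClass V F T t).powersetCard 2 := by
    intro t ht t' ht' hne
    refine disjoint_left.mpr fun e he he' => hne ?_
    obtain ⟨v, hv⟩ := card_pos.mp (by rw [(mem_powersetCard.mp he).2]; omega : 0 < e.card)
    exact eq_of_mem_privateClass ((mem_powersetCard.mp he).1 hv) ((mem_powersetCard.mp he').1 hv)
      ht ht'
  simp only [← card_powersetCard, ← card_biUnion hdisj]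
  refine card_le_card_of_forall_subsingleton (fun e C => e ⊆ C) ?_ ?_
  · intro e he
    obtain ⟨t, ht, he⟩ := mem_biUnion.mp he
    obtain ⟨heS, he2⟩ := mem_powersetCard.mp he
    obtain ⟨u, v, huv, rfl⟩ := card_eq_two.mp he2
    have hu : u ∈ privateClass V F T t := heS (by simp)
    have hv : v ∈ privateClass V F T t := heS (by simp)
    obtain ⟨C, hC, huC, hvC⟩ :=
      hS.covered_of_mem_privateClass (by omega) hTV (by omega) ht hu hv huv
    exact ⟨C, mem_filter.mpr ⟨hC, adjT_of_mem_privateClass (by omega) ht hu hv huv huC hvC⟩,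
      insert_subset huC (singleton_subset_iff.mpr hvC)⟩
  · rintro C hC e ⟨heQ, heC⟩ e' ⟨he'Q, he'C⟩
    obtain ⟨t, ht, he⟩ := mem_biUnion.mp heQ
    obtain ⟨t', ht', he'⟩ := mem_biUnion.mp he'Q
    exact hS.eq_of_card_two_subset_privateClass hL hV hTV (by omega) (mem_filter.mp hC).1 ht ht'
      he he' heC he'C

end PrivateNeighbours

/-- In a spreading linear triple system on `n > 5` vertices, every triple
`T` has at least `Val(T)(Val(T) - 3)/6` adjacent triples. -/
theorem statement_15 {α : Type*} [DecidableEq α] (V : Finset α) (F : Finset (Finset α))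
    (n : ℕ) (hn : V.card = n) (hL : IsLinearTS V F) (hS : IsSpreading V F) (hV : 5 < n)
    (T : Finset α) (hT : T ∈ F) :
    (valT V F T : ℝ) * ((valT V F T : ℝ) - 3) / 6
      ≤ ((F.filter fun T' => AdjT F T T').card : ℝ) := by
  have hT3 : (T.card : ℝ) = 3 := by exact_mod_cast (hL.1 T hT).2
  calc (valT V F T : ℝ) * ((valT V F T : ℝ) - 3) / 6
      = (∑ t ∈ T, ((privateClass V F T t).card : ℝ))
          * (∑ t ∈ T, ((privateClass V F T t).card : ℝ) - T.card) / (2 * T.card) := by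
        rw [valT_eq_card_privateNbrs, card_privateNbrs_eq_sum, hT3]
        push_cast
        ring
    _ ≤ ∑ t ∈ T, ((privateClass V F T t).card.choose 2 : ℝ) :=
        sum_mul_sub_card_div_le_sum_choose_two _ _
    _ ≤ _ := by exact_mod_cast hS.sum_choose_two_card_privateClass_le hL (by omega) hT
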